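/- arXiv:1202.3367 — 2 statements merged into one kernel-verified Lean document; each statement's English description precedes it below -/
import Mathlib

section
/- Let P be symmetric positive definite, B a real matrix, L = BᵀP⁻¹B, and d in the column space of L. Define f* = P⁻¹B L⁺ d. Then for any flow f satisfying Bᵀf = d, we have fᵀPf ≥ (f*)ᵀP f*. In other words, f* minimizes the quadratic energy among all flows meeting the demands. -/
open Matrix

namespace Matrix

variable {a b : Type*} [Fintype a] [Fintype b]

theorem add_dotProduct_mulVec_add_of_transpose_eq {P : Matrix a a ℝ} (hP : Pᵀ = P)
    (u g : a → ℝ) :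
    (u + g) ⬝ᵥ (P *ᵥ (u + g)) = u ⬝ᵥ (P *ᵥ u) + 2 * (g ⬝ᵥ (P *ᵥ u)) + g ⬝ᵥ (P *ᵥ g) := by
  have hsymm : u ⬝ᵥ (P *ᵥ g) = g ⬝ᵥ (P *ᵥ u) := by
    rw [dotProduct_mulVec, ← mulVec_transpose, hP, dotProduct_comm]
  rw [mulVec_add, add_dotProduct, dotProduct_add, dotProduct_add, hsymm]
  ring

/-- `f - u` lies in `ker Bᵀ`, which is `P`-orthogonal to `u` because `P u ∈ range B`. -/
theorem PosSemidef.dotProduct_mulVec_le_of_transpose_mulVec_eq {P : Matrix a a ℝ}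
    (hP : P.PosSemidef) {B : Matrix a b ℝ} {x : b → ℝ} {u f : a → ℝ}
    (hu : P *ᵥ u = B *ᵥ x) (hf : Bᵀ *ᵥ f = Bᵀ *ᵥ u) :
    u ⬝ᵥ (P *ᵥ u) ≤ f ⬝ᵥ (P *ᵥ f) := by
  have hPt : Pᵀ = P := by simpa using hP.1.eq
  have hker : Bᵀ *ᵥ (f - u) = 0 := by rw [mulVec_sub, hf, sub_self]
  have horth : (f - u) ⬝ᵥ (P *ᵥ u) = 0 := by
    rw [hu, dotProduct_mulVec, ← mulVec_transpose, hker, zero_dotProduct]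
  have hnonneg : 0 ≤ (f - u) ⬝ᵥ (P *ᵥ (f - u)) := by
    simpa using hP.dotProduct_mulVec_nonneg (f - u)
  calc u ⬝ᵥ (P *ᵥ u) ≤ (u + (f - u)) ⬝ᵥ (P *ᵥ (u + (f - u))) := by
        rw [add_dotProduct_mulVec_add_of_transpose_eq hPt, horth]
        linarith
    _ = f ⬝ᵥ (P *ᵥ f) := by rw [add_sub_cancel]

end Matrix

theorem stmt7_general {a b : Type*} [Fintype a] [Fintype b] [DecidableEq a]
    (P : Matrix a a ℝ) (hP : P.PosDef) (B : Matrix a b ℝ)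
    (L : Matrix b b ℝ) (hL : L = Bᵀ * P⁻¹ * B)
    (Lp : Matrix b b ℝ)
    (d : b → ℝ) (hd : L *ᵥ (Lp *ᵥ d) = d)
    (f : a → ℝ) (hf : Bᵀ *ᵥ f = d) :
    (P⁻¹ *ᵥ (B *ᵥ (Lp *ᵥ d))) ⬝ᵥ (P *ᵥ (P⁻¹ *ᵥ (B *ᵥ (Lp *ᵥ d)))) ≤
      f ⬝ᵥ (P *ᵥ f) := by
  have hPdet : IsUnit P.det := isUnit_iff_ne_zero.mpr hP.det_pos.ne'
  refine hP.posSemidef.dotProduct_mulVec_le_of_transpose_mulVec_eq (B := B) (x := Lp *ᵥ d) ?_ ?_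
  · rw [mulVec_mulVec, mul_nonsing_inv P hPdet, one_mulVec]
  · rw [hf, mulVec_mulVec, mulVec_mulVec, ← hL, hd]

/-- For `L = Bᵀ P⁻¹ B` with `P` symmetric positive definite, `Lp` the
Moore–Penrose pseudoinverse of `L`, and `d` in the column space of `L`,
the flow `f* = P⁻¹ B L⁺ d` minimizes the energy `fᵀ P f` among all flows
satisfying `Bᵀ f = d`. -/
theorem stmt7 {a b : Type*} [Fintype a] [Fintype b] [DecidableEq a] [DecidableEq b]
    (P : Matrix a a ℝ) (hP : P.PosDef) (B : Matrix a b ℝ)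
    (L : Matrix b b ℝ) (hL : L = Bᵀ * P⁻¹ * B)
    (Lp : Matrix b b ℝ)
    (hmp1 : L * Lp * L = L) (hmp2 : Lp * L * Lp = Lp)
    (hmp3 : (L * Lp)ᵀ = L * Lp) (hmp4 : (Lp * L)ᵀ = Lp * L)
    (d : b → ℝ) (hd : L *ᵥ (Lp *ᵥ d) = d)
    (f : a → ℝ) (hf : Bᵀ *ᵥ f = d) :
    (P⁻¹ *ᵥ (B *ᵥ (Lp *ᵥ d))) ⬝ᵥ (P *ᵥ (P⁻¹ *ᵥ (B *ᵥ (Lp *ᵥ d)))) ≤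
      f ⬝ᵥ (P *ᵥ f) :=
  stmt7_general P hP B L hL Lp d hd f hf
end

section
/- Let f⁽¹⁾, …, f⁽ᴺ⁾ ∈ ℝᵏ be vectors and u > 0 a capacity. Suppose the positive semidefinite matrix inequality (1/u²)·∑_{t=1}^{N} f⁽ᵗ⁾(f⁽ᵗ⁾)ᵀ ⪯ (1+2ε)·∑_{t=0}^{N−1} E_{i(t)} + (εN/k)·I holds, where each E_i is the k×k matrix with a 1 in entry (i,i) and zeros elsewhere, and ε ≥ 0. Then the average flow satisfies ‖(1/(uN))·∑_{t=1}^{N} f⁽ᵗ⁾‖₁ ≤ √(1+3ε). -/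
/-!
Test the Loewner inequality against the sign vector `s` of `∑ₜ f⁽ᵗ⁾`. As `s` is a `±1` vector,
`sᵀ E_i s = 1` and `sᵀ s = k`, so `∑ₜ (s ⬝ f⁽ᵗ⁾)² ≤ u² (1 + 3ε) N`. Cauchy–Schwarz over `t` then
bounds `(∑ₜ s ⬝ f⁽ᵗ⁾)² = ‖∑ₜ f⁽ᵗ⁾‖₁²` by `N` times this.
-/

open Matrix

section QuadraticForm

variable {n τ : Type*} [Fintype n] [Fintype τ]

lemma Matrix.PosSemidef.dotProduct_mulVec_le_of_sub {A B : Matrix n n ℝ}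
    (h : (A - B).PosSemidef) (s : n → ℝ) : s ⬝ᵥ (B *ᵥ s) ≤ s ⬝ᵥ (A *ᵥ s) := by
  have := h.dotProduct_mulVec_nonneg s
  rwa [star_trivial, sub_mulVec, dotProduct_sub, sub_nonneg] at this

lemma dotProduct_sum_vecMulVec_mulVec (s : n → ℝ) (f : τ → n → ℝ) :
    s ⬝ᵥ ((∑ t, vecMulVec (f t) (f t)) *ᵥ s) = ∑ t, (s ⬝ᵥ f t) ^ 2 := by
  simp only [sum_mulVec, dotProduct_sum, vecMulVec_mulVec, op_smul_eq_smul, dotProduct_smul,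
    smul_eq_mul, dotProduct_comm (f _) s, sq]

variable [DecidableEq n]

lemma dotProduct_sum_single_mulVec (s : n → ℝ) (idx : τ → n) :
    s ⬝ᵥ ((∑ t, single (idx t) (idx t) (1 : ℝ)) *ᵥ s) = ∑ t, s (idx t) * s (idx t) := by
  rw [sum_mulVec, dotProduct_sum]
  refine Finset.sum_congr rfl fun t _ => ?_
  rw [single_mulVec, one_mul]
  exact dotProduct_single ..

end QuadraticForm

/-- Unlike `SignType.sign`, this is `1` at zero coordinates, so that every entry squares to `1`. -/
noncomputable def signVec {n : Type*} (x : n → ℝ) : n → ℝ := fun j => if 0 ≤ x j then 1 else -1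

lemma signVec_mul_self {n : Type*} (x : n → ℝ) (j : n) : signVec x j * signVec x j = 1 := by
  unfold signVec
  split_ifs <;> norm_num

lemma signVec_dotProduct {n : Type*} [Fintype n] (x : n → ℝ) : signVec x ⬝ᵥ x = ∑ j, |x j| := by
  refine Finset.sum_congr rfl fun j _ => ?_
  unfold signVec
  split_ifs with hj
  · rw [one_mul, abs_of_nonneg hj]
  · rw [neg_one_mul, abs_of_neg (not_le.1 hj)]

section LoewnerBound

variable {k N : ℕ} {f : Fin N → Fin k → ℝ} {idx : Fin N → Fin k} {u ε : ℝ}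

lemma sum_sq_dotProduct_le_of_posSemidef (hk : 0 < k) (hu : u ≠ 0)
    (h : ((1 + 2 * ε) • (∑ t, Matrix.single (idx t) (idx t) (1 : ℝ)) +
          (ε * N / k) • (1 : Matrix (Fin k) (Fin k) ℝ) -
          (u ^ 2)⁻¹ • (∑ t, vecMulVec (f t) (f t))).PosSemidef)
    {s : Fin k → ℝ} (hs : ∀ j, s j * s j = 1) :
    ∑ t, (s ⬝ᵥ f t) ^ 2 ≤ u ^ 2 * ((1 + 3 * ε) * N) := by
  have hq := h.dotProduct_mulVec_le_of_sub s
  have hss : s ⬝ᵥ s = k := by simp [dotProduct, hs]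
  rw [smul_mulVec, dotProduct_smul, dotProduct_sum_vecMulVec_mulVec, add_mulVec, dotProduct_add,
    smul_mulVec, smul_mulVec, dotProduct_smul, dotProduct_smul, dotProduct_sum_single_mulVec,
    one_mulVec, hss] at hq
  simp only [hs, smul_eq_mul, Finset.sum_const, Finset.card_univ, Fintype.card_fin, nsmul_eq_mul,
    mul_one] at hq
  have hk' : (k : ℝ) ≠ 0 := by positivity
  rw [← inv_mul_le_iff₀ (by positivity)]
  calc (u ^ 2)⁻¹ * ∑ t, (s ⬝ᵥ f t) ^ 2 ≤ (1 + 2 * ε) * N + ε * N / k * k := hq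
    _ = (1 + 3 * ε) * N := by field_simp; ring

lemma sum_abs_sum_le_of_posSemidef (hk : 0 < k) (hu : 0 < u)
    (h : ((1 + 2 * ε) • (∑ t, Matrix.single (idx t) (idx t) (1 : ℝ)) +
          (ε * N / k) • (1 : Matrix (Fin k) (Fin k) ℝ) -
          (u ^ 2)⁻¹ • (∑ t, vecMulVec (f t) (f t))).PosSemidef) :
    ∑ j, |∑ t, f t j| ≤ u * N * √(1 + 3 * ε) := by
  set s := signVec (∑ t, f t)
  have hS : ∑ j, |∑ t, f t j| = ∑ t, s ⬝ᵥ f t := by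
    rw [← dotProduct_sum, signVec_dotProduct]
    simp only [Finset.sum_apply]
  have hsq : (∑ j, |∑ t, f t j|) ^ 2 ≤ (u * N) ^ 2 * (1 + 3 * ε) :=
    calc (∑ j, |∑ t, f t j|) ^ 2 = (∑ t, s ⬝ᵥ f t) ^ 2 := by rw [hS]
      _ ≤ N * ∑ t, (s ⬝ᵥ f t) ^ 2 := by
        simpa using sq_sum_le_card_mul_sum_sq (s := Finset.univ) (f := fun t => s ⬝ᵥ f t)
      _ ≤ N * (u ^ 2 * ((1 + 3 * ε) * N)) := by
        gcongr
        exact sum_sq_dotProduct_le_of_posSemidef hk hu.ne' h (signVec_mul_self _)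
      _ = (u * N) ^ 2 * (1 + 3 * ε) := by ring
  calc ∑ j, |∑ t, f t j| ≤ √((u * N) ^ 2 * (1 + 3 * ε)) := Real.le_sqrt_of_sq_le hsq
    _ = u * N * √(1 + 3 * ε) := by rw [Real.sqrt_mul (sq_nonneg _), Real.sqrt_sq (by positivity)]

end LoewnerBound

theorem stmt10_general {k N : ℕ} (hk : 0 < k)
    (f : Fin N → Fin k → ℝ) (idx : Fin N → Fin k) (u ε : ℝ)
    (hu : 0 < u)
    (h : ((1 + 2 * ε) • (∑ t, Matrix.single (idx t) (idx t) (1 : ℝ)) +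
          (ε * N / k) • (1 : Matrix (Fin k) (Fin k) ℝ) -
          (u ^ 2)⁻¹ • (∑ t, vecMulVec (f t) (f t))).PosSemidef) :
    ∑ j, |(u * N)⁻¹ * ∑ t, f t j| ≤ Real.sqrt (1 + 3 * ε) := by
  have hscale : 0 ≤ (u * N)⁻¹ := by positivity
  calc ∑ j, |(u * N)⁻¹ * ∑ t, f t j| = (u * N)⁻¹ * ∑ j, |∑ t, f t j| := by
        rw [Finset.mul_sum]
        exact Finset.sum_congr rfl fun j _ => by rw [abs_mul, abs_of_nonneg hscale]
    _ ≤ (u * N)⁻¹ * (u * N * √(1 + 3 * ε)) := by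
        gcongr
        exact sum_abs_sum_le_of_posSemidef hk hu h
    _ ≤ √(1 + 3 * ε) := by
        rw [← mul_assoc]
        exact mul_le_of_le_one_left (Real.sqrt_nonneg _) inv_mul_le_one

/-- If `(1/u²) ∑_t f⁽ᵗ⁾ (f⁽ᵗ⁾)ᵀ ⪯ (1+2ε) ∑_t E_{i(t)} + (εN/k) I` in the
Loewner order, then the average flow satisfies
`‖(1/(uN)) ∑_t f⁽ᵗ⁾‖₁ ≤ √(1+3ε)`. -/
theorem stmt10 {k N : ℕ} (hk : 0 < k) (hN : 0 < N)
    (f : Fin N → Fin k → ℝ) (idx : Fin N → Fin k) (u ε : ℝ)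
    (hu : 0 < u) (hε : 0 ≤ ε)
    (h : ((1 + 2 * ε) • (∑ t, Matrix.single (idx t) (idx t) (1 : ℝ)) +
          (ε * N / k) • (1 : Matrix (Fin k) (Fin k) ℝ) -
          (u ^ 2)⁻¹ • (∑ t, vecMulVec (f t) (f t))).PosSemidef) :
    ∑ j, |(u * N)⁻¹ * ∑ t, f t j| ≤ Real.sqrt (1 + 3 * ε) :=
  stmt10_general hk f idx u ε hu h
end
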